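/- The past mask P_{[a,b]} m is optimal for the eventually context: if m' is a mask with m'(t₀) = false for some t₀ with (P_{[a,b]} m)(t₀) = true, then m' is not sufficient, i.e., there exists a signal s and a time t with m(t) = true such that F_{[a,b]}(s|_{m'})(t) ≠ F_{[a,b]}(s)(t). -/

import Mathlib

inductive TV : Type | T | F | U
deriving DecidableEq

open TV Set Pointwise

def maskApply (s : ℝ → TV) (m : ℝ → Bool) : ℝ → TV :=
  fun t => if m t then s t else TV.U

def tvNot : TV → TV
  | TV.T => TV.F | TV.F => TV.T | TV.U => TV.U

def tvOr : TV → TV → TV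
  | TV.T, _ => TV.T
  | _, TV.T => TV.T
  | TV.F, TV.F => TV.F
  | _, _ => TV.U

def tvAnd : TV → TV → TV
  | TV.F, _ => TV.F
  | _, TV.F => TV.F
  | TV.T, TV.T => TV.T
  | _, _ => TV.U

open Classical in
noncomputable def evOp (a b : ℝ) (s : ℝ → TV) : ℝ → TV :=
  fun t =>
    if ∃ t' ∈ Set.Icc (t + a) (t + b), s t' = TV.T then TV.T
    else if ∀ t' ∈ Set.Icc (t + a) (t + b), s t' = TV.F then TV.F
    else TV.U

open Classical in
noncomputable def glOp (a b : ℝ) (s : ℝ → TV) : ℝ → TV :=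
  fun t =>
    if ∃ t' ∈ Set.Icc (t + a) (t + b), s t' = TV.F then TV.F
    else if ∀ t' ∈ Set.Icc (t + a) (t + b), s t' = TV.T then TV.T
    else TV.U

open Classical in
noncomputable def pastMask (a b : ℝ) (m : ℝ → Bool) : ℝ → Bool :=
  fun t => decide (∃ t'' ∈ Set.Icc (t - b) (t - a) ∩ Set.Ici (0:ℝ), m t'' = true)

def orMask (s : ℝ → TV) : ℝ → Bool := fun t => !(s t == TV.T)

def andMask (s : ℝ → TV) : ℝ → Bool := fun t => !(s t == TV.F)

def Hset (a b : ℝ) (S : Set ℝ) : Set ℝ := {t | Set.Icc (t - b) (t - a) ⊆ S}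

def Pset (a b : ℝ) (S : Set ℝ) : Set ℝ := {t | ∃ t' ∈ Set.Icc (t - b) (t - a), t' ∈ S}

/- The witness is the pulse that is `T` at `t₀` and `U` elsewhere. Some `t` with `m t` has `t₀`
in its window `[t + a, t + b]`, so the pulse is eventually `T` at `t`; masking by `m'` erases its
only `T`, so the masked pulse is not. -/

lemma evOp_eq_T_iff {a b t : ℝ} {s : ℝ → TV} :
    evOp a b s t = T ↔ ∃ t' ∈ Icc (t + a) (t + b), s t' = T := by
  unfold evOp
  split_ifs with h₁ h₂ <;> simp_all

lemma maskApply_eq_T_iff {s : ℝ → TV} {m : ℝ → Bool} {t : ℝ} :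
    maskApply s m t = T ↔ m t = true ∧ s t = T := by
  unfold maskApply
  split_ifs with h <;> simp [h]

lemma exists_mem_Icc_add_of_pastMask {a b t₀ : ℝ} {m : ℝ → Bool} (h : pastMask a b m t₀ = true) :
    ∃ t, m t = true ∧ t₀ ∈ Icc (t + a) (t + b) := by
  simp only [pastMask, decide_eq_true_eq] at h
  obtain ⟨t, ⟨⟨htb, hta⟩, -⟩, hm⟩ := h
  exact ⟨t, hm, by linarith, by linarith⟩

open Classical in
noncomputable def pulse (t₀ : ℝ) : ℝ → TV := fun t => if t = t₀ then T else U

lemma pulse_eq_T_iff {t₀ t : ℝ} : pulse t₀ t = T ↔ t = t₀ := by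
  unfold pulse
  split_ifs with h <;> simp [h]

lemma evOp_pulse_of_mem {a b t₀ t : ℝ} (h : t₀ ∈ Icc (t + a) (t + b)) :
    evOp a b (pulse t₀) t = T :=
  evOp_eq_T_iff.2 ⟨t₀, h, pulse_eq_T_iff.2 rfl⟩

lemma evOp_maskApply_pulse_ne_T {a b t₀ t : ℝ} {m : ℝ → Bool} (h : m t₀ = false) :
    evOp a b (maskApply (pulse t₀) m) t ≠ T := by
  rintro hT
  obtain ⟨t', -, ht'⟩ := evOp_eq_T_iff.1 hT
  obtain ⟨hm, rfl⟩ := And.imp_right pulse_eq_T_iff.1 (maskApply_eq_T_iff.1 ht')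
  simp [h] at hm

theorem pastMask_optimal_eventually_general (a b : ℝ)
    (m m' : ℝ → Bool) (t₀ : ℝ) (h₀ : m' t₀ = false) (hP : pastMask a b m t₀ = true) :
    ∃ (s : ℝ → TV) (t : ℝ), m t = true ∧
      evOp a b (maskApply s m') t ≠ evOp a b s t := by
  obtain ⟨t, hm, hwin⟩ := exists_mem_Icc_add_of_pastMask hP
  refine ⟨pulse t₀, t, hm, ?_⟩
  rw [evOp_pulse_of_mem hwin]
  exact evOp_maskApply_pulse_ne_T h₀

theorem pastMask_optimal_eventually (a b : ℝ) (ha : 0 ≤ a) (hab : a ≤ b)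
    (m m' : ℝ → Bool) (t₀ : ℝ) (h₀ : m' t₀ = false) (hP : pastMask a b m t₀ = true) :
    ∃ (s : ℝ → TV) (t : ℝ), m t = true ∧
      evOp a b (maskApply s m') t ≠ evOp a b s t :=
  pastMask_optimal_eventually_general a b m m' t₀ h₀ hP
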